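/- arXiv:2111.11864 — 3 statements merged into one kernel-verified Lean document; each statement's English description precedes it below -/
import Mathlib

section
/- For nonnegative integers m ≥ 1, n, and sequences of nonnegative integers a_1,...,a_m and c_1,...,c_m, the sum over all tuples (k_1,...,k_m) of nonnegative integers with k_1 + ... + k_m = n of the product ∏_{i=1}^m C(a_i, k_i) * C(k_i, c_i) equals C(A_0 - C_0, n - C_0) * ∏_{i=1}^m C(a_i, c_i), where A_0 = a_1 + ... + a_m and C_0 = c_1 + ... + c_m. -/
open Finset

/-- Binomial coefficient with integer arguments, zero when `k < 0` or `k > n`. -/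
def ch (n k : ℤ) : ℚ := if 0 ≤ k ∧ k ≤ n then (n.toNat.choose k.toNat : ℚ) else 0

lemma ch_natCast (n k : ℕ) : ch (n : ℤ) (k : ℤ) = (n.choose k : ℚ) := by
  unfold ch
  by_cases h : k ≤ n
  · simp [h]
  · rw [if_neg (by omega), Nat.choose_eq_zero_of_lt (by omega), Nat.cast_zero]

lemma sum_antidiagonalTuple_succ {M : Type*} [AddCommMonoid M] (m n : ℕ)
    (f : (Fin (m + 1) → ℕ) → M) :
    ∑ x ∈ Finset.Nat.antidiagonalTuple (m + 1) n, f x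
      = ∑ p ∈ Finset.HasAntidiagonal.antidiagonal n,
          ∑ x ∈ Finset.Nat.antidiagonalTuple m p.2, f (Fin.cons p.1 x) := by
  rw [Finset.sum_sigma']
  refine Finset.sum_nbij'
    (fun (x : Fin (m + 1) → ℕ) =>
      (⟨(x 0, ∑ i : Fin m, x i.succ), Fin.tail x⟩ : (_ : ℕ × ℕ) × (Fin m → ℕ)))
    (fun y => Fin.cons y.1.1 y.2) ?_ ?_ ?_ ?_ ?_
  · intro x hx
    rw [Finset.Nat.mem_antidiagonalTuple] at hx
    rw [Finset.mem_sigma, Finset.HasAntidiagonal.mem_antidiagonal, Finset.Nat.mem_antidiagonalTuple]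
    rw [Fin.sum_univ_succ] at hx
    exact ⟨hx, rfl⟩
  · intro y hy
    rw [Finset.mem_sigma, Finset.HasAntidiagonal.mem_antidiagonal, Finset.Nat.mem_antidiagonalTuple] at hy
    rw [Finset.Nat.mem_antidiagonalTuple, Fin.sum_univ_succ]
    simp only [Fin.cons_zero, Fin.cons_succ]
    rw [hy.2, hy.1]
  · intro x hx
    exact (Fin.cons_self_tail x)
  · intro y hy
    rw [Finset.mem_sigma, Finset.HasAntidiagonal.mem_antidiagonal, Finset.Nat.mem_antidiagonalTuple] at hy
    refine Sigma.ext ?_ ?_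
    · simp only [Fin.cons_zero, Fin.cons_succ]
      exact Prod.ext rfl (by simpa [Fin.tail] using hy.2)
    · simp [Fin.tail]
  · intro x hx
    simp [Fin.cons_self_tail]

lemma multi_vandermonde (m : ℕ) : ∀ (n : ℕ) (a : Fin m → ℕ),
    ∑ k ∈ Finset.Nat.antidiagonalTuple m n, ∏ i, (a i).choose (k i) = (∑ i, a i).choose n := by
  induction m with
  | zero =>
    intro n a
    cases n with
    | zero => simp
    | succ n => simp [Finset.Nat.antidiagonalTuple_zero_succ, Nat.choose_eq_zero_of_lt]
  | succ m ih =>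
    intro n a
    rw [sum_antidiagonalTuple_succ]
    have h1 : ∀ p : ℕ × ℕ, ∀ x : Fin m → ℕ, x ∈ Finset.Nat.antidiagonalTuple m p.2 →
        ∏ i, (a i).choose ((Fin.cons p.1 x : Fin (m + 1) → ℕ) i)
          = (a 0).choose p.1 * ∏ i : Fin m, (a i.succ).choose (x i) := by
      intro p x _
      rw [Fin.prod_univ_succ]
      simp
    calc ∑ p ∈ Finset.HasAntidiagonal.antidiagonal n, ∑ x ∈ Finset.Nat.antidiagonalTuple m p.2,
            ∏ i, (a i).choose ((Fin.cons p.1 x : Fin (m + 1) → ℕ) i)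
        = ∑ p ∈ Finset.HasAntidiagonal.antidiagonal n,
            (a 0).choose p.1 * (∑ i : Fin m, a i.succ).choose p.2 := by
          refine Finset.sum_congr rfl fun p _ => ?_
          rw [Finset.sum_congr rfl (h1 p), ← Finset.mul_sum,
            ih p.2 (fun i => a i.succ)]
      _ = (a 0 + ∑ i : Fin m, a i.succ).choose n := (Nat.add_choose_eq _ _ _).symm
      _ = (∑ i, a i).choose n := by rw [Fin.sum_univ_succ]

lemma choose_mul' (a k c : ℕ) (h : c ≤ k) :
    a.choose k * k.choose c = a.choose c * (a - c).choose (k - c) := by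
  rcases le_or_gt k a with h2 | h2
  · exact Nat.choose_mul h
  · rcases le_or_gt c a with h3 | h3
    · rw [Nat.choose_eq_zero_of_lt h2, Nat.zero_mul,
        Nat.choose_eq_zero_of_lt (show a - c < k - c by omega), Nat.mul_zero]
    · rw [Nat.choose_eq_zero_of_lt h2, Nat.zero_mul, Nat.choose_eq_zero_of_lt h3, Nat.zero_mul]

lemma key (m n : ℕ) (a c : Fin m → ℕ) (hac : ∀ i, c i ≤ a i) :
    ∑ k ∈ Finset.Nat.antidiagonalTuple m n, ∏ i, (a i).choose (k i) * (k i).choose (c i)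
      = (if ∑ i, c i ≤ n then ((∑ i, a i) - ∑ i, c i).choose (n - ∑ i, c i) else 0)
          * ∏ i, (a i).choose (c i) := by
  by_cases hcn : ∑ i, c i ≤ n
  · rw [if_pos hcn]
    rw [← Finset.sum_filter_add_sum_filter_not _ (fun k => ∀ i, c i ≤ k i)]
    have h2 : ∑ k ∈ (Finset.Nat.antidiagonalTuple m n).filter (fun k => ¬ ∀ i, c i ≤ k i),
        ∏ i, (a i).choose (k i) * (k i).choose (c i) = 0 := by
      refine Finset.sum_eq_zero fun k hk => ?_
      rw [Finset.mem_filter] at hk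
      push_neg at hk
      obtain ⟨i, hi⟩ := hk.2
      exact Finset.prod_eq_zero (Finset.mem_univ i)
        (by rw [Nat.choose_eq_zero_of_lt hi, Nat.mul_zero])
    rw [h2, add_zero]
    have h3 : ∀ k ∈ (Finset.Nat.antidiagonalTuple m n).filter (fun k => ∀ i, c i ≤ k i),
        ∏ i, (a i).choose (k i) * (k i).choose (c i)
          = (∏ i, (a i).choose (c i)) * ∏ i, ((a i) - (c i)).choose ((k i) - (c i)) := by
      intro k hk
      rw [Finset.mem_filter] at hk
      rw [← Finset.prod_mul_distrib]
      exact Finset.prod_congr rfl fun i _ => choose_mul' _ _ _ (hk.2 i)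
    rw [Finset.sum_congr rfl h3, ← Finset.mul_sum]
    have h4 : ∑ k ∈ (Finset.Nat.antidiagonalTuple m n).filter (fun k => ∀ i, c i ≤ k i),
        ∏ i, ((a i) - (c i)).choose ((k i) - (c i))
          = ∑ j ∈ Finset.Nat.antidiagonalTuple m (n - ∑ i, c i),
              ∏ i, ((a i) - (c i)).choose (j i) := by
      refine Finset.sum_nbij' (fun k i => k i - c i) (fun j i => j i + c i) ?_ ?_ ?_ ?_ ?_
      · intro k hk
        rw [Finset.mem_filter, Finset.Nat.mem_antidiagonalTuple] at hk
        rw [Finset.Nat.mem_antidiagonalTuple]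
        show ∑ i, (k i - c i) = n - ∑ i, c i
        rw [Finset.sum_tsub_distrib _ (fun i _ => hk.2 i), hk.1]
      · intro j hj
        rw [Finset.Nat.mem_antidiagonalTuple] at hj
        refine Finset.mem_filter.2 ⟨?_, fun i => Nat.le_add_left _ _⟩
        rw [Finset.Nat.mem_antidiagonalTuple]
        show ∑ i, (j i + c i) = n
        rw [Finset.sum_add_distrib, hj]
        exact Nat.sub_add_cancel hcn
      · intro k hk
        rw [Finset.mem_filter] at hk
        funext i
        exact Nat.sub_add_cancel (hk.2 i)
      · intro j hj
        funext i
        show j i + c i - c i = j i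
        simp
      · intro k hk
        rfl
    rw [h4, multi_vandermonde, Finset.sum_tsub_distrib _ (fun i _ => hac i), mul_comm]
  · rw [if_neg hcn, Nat.zero_mul]
    refine Finset.sum_eq_zero fun k hk => ?_
    rw [Finset.Nat.mem_antidiagonalTuple] at hk
    have : ∃ i, k i < c i := by
      by_contra h
      push_neg at h
      exact hcn (hk ▸ Finset.sum_le_sum fun i _ => h i)
    obtain ⟨i, hi⟩ := this
    exact Finset.prod_eq_zero (Finset.mem_univ i)
      (by rw [Nat.choose_eq_zero_of_lt hi, Nat.mul_zero])

theorem stmt0 (m n : ℕ) (hm : 1 ≤ m) (a c : Fin m → ℕ) :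
    (∑ k ∈ Finset.Nat.antidiagonalTuple m n, (∏ i, ch (a i) (k i) * ch (k i) (c i)))
      = ch ((∑ i, (a i : ℤ)) - ∑ i, (c i : ℤ)) ((n : ℤ) - ∑ i, (c i : ℤ)) * (∏ i, ch (a i) (c i)) := by
  by_cases hac : ∀ i, c i ≤ a i
  · have hl : (∑ k ∈ Finset.Nat.antidiagonalTuple m n, (∏ i, ch (a i) (k i) * ch (k i) (c i)))
        = ((∑ k ∈ Finset.Nat.antidiagonalTuple m n,
            ∏ i, (a i).choose (k i) * (k i).choose (c i) : ℕ) : ℚ) := by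
      push_cast
      refine Finset.sum_congr rfl fun k _ => Finset.prod_congr rfl fun i _ => ?_
      rw [ch_natCast, ch_natCast]
    rw [hl, key m n a c hac]
    have hr : (∏ i, ch ((a i : ℤ)) ((c i : ℤ))) = ((∏ i, (a i).choose (c i) : ℕ) : ℚ) := by
      push_cast
      exact Finset.prod_congr rfl fun i _ => ch_natCast _ _
    rw [hr]
    push_cast
    congr 1
    -- remains: cast of if = ch value
    have hCA : ∑ i, c i ≤ ∑ i, a i := Finset.sum_le_sum fun i _ => hac i
    have hs1 : (∑ i, ((a i : ℤ))) = ((∑ i, a i : ℕ) : ℤ) := by push_cast; ring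
    have hs2 : (∑ i, ((c i : ℤ))) = ((∑ i, c i : ℕ) : ℤ) := by push_cast; ring
    rw [hs1, hs2]
    set A := ∑ i, a i
    set C := ∑ i, c i
    by_cases hcn : C ≤ n
    · rw [if_pos hcn]
      by_cases hna : n ≤ A
      · unfold ch
        rw [if_pos ⟨by omega, by omega⟩]
        congr 2 <;> omega
      · unfold ch
        rw [if_neg (by omega), Nat.choose_eq_zero_of_lt (by omega), Nat.cast_zero]
    · rw [if_neg hcn]
      unfold ch
      rw [if_neg (by omega)]
  · push_neg at hac
    obtain ⟨i0, hi0⟩ := hac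
    have hz : ch ((a i0 : ℤ)) ((c i0 : ℤ)) = 0 := by
      rw [ch_natCast, Nat.choose_eq_zero_of_lt hi0, Nat.cast_zero]
    rw [Finset.prod_eq_zero (Finset.mem_univ i0) hz, mul_zero]
    refine Finset.sum_eq_zero fun k hk => ?_
    refine Finset.prod_eq_zero (Finset.mem_univ i0) ?_
    rw [ch_natCast, ch_natCast]
    rcases le_or_gt (k i0) (a i0) with h | h
    · rw [Nat.choose_eq_zero_of_lt (show k i0 < c i0 by omega), Nat.cast_zero, mul_zero]
    · rw [Nat.choose_eq_zero_of_lt h, Nat.cast_zero, zero_mul]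
end

section
/- For integers m ≥ 1, n ≥ 0, sequences of nonnegative integers a_1,...,a_m and c_1,...,c_m, and rational (or complex) numbers x_1,...,x_m, the sum over all tuples (k_1,...,k_m) with ∑ k_i = n of [∏_{i=1}^m C(a_i,k_i)C(k_i,c_i)] * (∑_{i=1}^m x_i k_i), multiplied by (A_0 - C_0), equals C(A_0-C_0, n-C_0) * [∏_{i=1}^m C(a_i,c_i)] * ((n-C_0) A_1 + (A_0-n) C_1). -/
open Finset

lemma ch_natCast_s2 (a k : ℕ) : ch a k = (a.choose k : ℚ) := by
  unfold ch
  by_cases h : k ≤ a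
  · rw [if_pos ⟨Int.natCast_nonneg k, by exact_mod_cast h⟩]
    simp
  · rw [if_neg (by omega), Nat.choose_eq_zero_of_lt (by omega), Nat.cast_zero]

lemma ch_neg_right {a k : ℤ} (h : k < 0) : ch a k = 0 := by
  unfold ch; rw [if_neg (by omega)]

lemma ch_lt {a k : ℤ} (h : a < k) : ch a k = 0 := by
  unfold ch; rw [if_neg (by omega)]

lemma mul_ch (a k : ℤ) : (k : ℚ) * ch a k = (a : ℚ) * ch (a - 1) (k - 1) := by
  rcases lt_trichotomy k 0 with hk | hk | hk
  · rw [ch_neg_right hk, ch_neg_right (by omega), mul_zero, mul_zero]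
  · subst hk
    rw [show (0:ℤ) - 1 = -1 by ring, show ch (a-1) (-1) = 0 from ch_neg_right (by norm_num),
      mul_zero]
    norm_num
  · by_cases hka : k ≤ a
    · have ha : 1 ≤ a := le_trans hk hka
      obtain ⟨K, rfl⟩ : ∃ K : ℕ, k = (K : ℤ) := ⟨k.toNat, by omega⟩
      obtain ⟨A, rfl⟩ : ∃ A : ℕ, a = (A : ℤ) := ⟨a.toNat, by omega⟩
      rw [show (A : ℤ) - 1 = ((A - 1 : ℕ) : ℤ) by omega,
          show (K : ℤ) - 1 = ((K - 1 : ℕ) : ℤ) by omega, ch_natCast_s2, ch_natCast_s2]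
      have hA : A - 1 + 1 = A := by omega
      have hK : K - 1 + 1 = K := by omega
      have h1 : A * ((A - 1).choose (K - 1)) = A.choose K * K := by
        simpa [Nat.succ_eq_add_one, hA, hK] using Nat.add_one_mul_choose_eq (A - 1) (K - 1)
      have h2 : (A : ℚ) * ((A - 1).choose (K - 1) : ℚ) = (A.choose K : ℚ) * K := by
        exact_mod_cast congrArg (Nat.cast : ℕ → ℚ) h1
      push_cast
      linarith
    · rw [ch_lt (by omega), ch_lt (by omega), mul_zero, mul_zero]

lemma choose_trisect {a k c : ℕ} (hc : c ≤ k) (hk : k ≤ a) :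
    a.choose k * k.choose c = a.choose c * (a - c).choose (k - c) := by
  have h1 := Nat.choose_mul_factorial_mul_factorial hk
  have h2 := Nat.choose_mul_factorial_mul_factorial hc
  have h3 := Nat.choose_mul_factorial_mul_factorial (Nat.sub_le_sub_right hk c)
  have h4 := Nat.choose_mul_factorial_mul_factorial (hc.trans hk)
  have hd : a - c - (k - c) = a - k := by omega
  rw [hd] at h3
  have hpos : 0 < c.factorial * (k - c).factorial * (a - k).factorial := by positivity
  apply Nat.eq_of_mul_eq_mul_right hpos
  calc a.choose k * k.choose c * (c.factorial * (k - c).factorial * (a - k).factorial)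
      = a.choose k * (k.choose c * c.factorial * (k - c).factorial) * (a - k).factorial := by ring
    _ = a.choose k * k.factorial * (a - k).factorial := by rw [h2]
    _ = a.factorial := h1
    _ = a.choose c * c.factorial * (a - c).factorial := h4.symm
    _ = a.choose c * c.factorial * ((a - c).choose (k - c) * (k - c).factorial * (a - k).factorial) := by rw [h3]
    _ = a.choose c * (a - c).choose (k - c) * (c.factorial * (k - c).factorial * (a - k).factorial) := by ring

lemma ch_trisect (a k c : ℤ) : ch a k * ch k c = ch a c * ch (a - c) (k - c) := by
  by_cases h : 0 ≤ c ∧ c ≤ k ∧ k ≤ a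
  · obtain ⟨h0, h1, h2⟩ := h
    obtain ⟨C, rfl⟩ : ∃ C : ℕ, c = (C : ℤ) := ⟨c.toNat, by omega⟩
    obtain ⟨K, rfl⟩ : ∃ K : ℕ, k = (K : ℤ) := ⟨k.toNat, by omega⟩
    obtain ⟨A, rfl⟩ : ∃ A : ℕ, a = (A : ℤ) := ⟨a.toNat, by omega⟩
    rw [show (A : ℤ) - C = ((A - C : ℕ) : ℤ) by omega,
        show (K : ℤ) - C = ((K - C : ℕ) : ℤ) by omega,
        ch_natCast_s2, ch_natCast_s2, ch_natCast_s2, ch_natCast_s2]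
    exact_mod_cast congrArg (Nat.cast : ℕ → ℚ)
      (choose_trisect (by exact_mod_cast h1) (by exact_mod_cast h2))
  · rcases lt_or_ge c 0 with h1 | h1
    · rw [ch_neg_right h1, mul_zero, ch_neg_right h1, zero_mul]
    · rcases lt_or_ge k c with h2 | h2
      · rw [ch_lt h2, mul_zero, show ch (a-c) (k-c) = 0 from ch_neg_right (by omega), mul_zero]
      · rcases lt_or_ge a k with h3 | h3
        · rw [ch_lt h3, zero_mul, show ch (a-c) (k-c) = 0 from ch_lt (by omega), mul_zero]
        · exact absurd ⟨h1, h2, h3⟩ h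


lemma sum_adt_succ {M : Type*} [AddCommMonoid M] (k n : ℕ) (f : (Fin (k+1) → ℕ) → M) :
    ∑ x ∈ Finset.Nat.antidiagonalTuple (k+1) n, f x
      = ∑ p ∈ Finset.HasAntidiagonal.antidiagonal n,
          ∑ x ∈ Finset.Nat.antidiagonalTuple k p.2, f (Fin.cons p.1 x) := by
  rw [← Finset.sum_sigma (Finset.HasAntidiagonal.antidiagonal n)
      (fun p => Finset.Nat.antidiagonalTuple k p.2) (fun q => f (Fin.cons q.1.1 q.2))]
  refine Finset.sum_bij' (fun x _ => (⟨(x 0, ∑ i : Fin k, x i.succ), Fin.tail x⟩ :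
      Σ _p : ℕ × ℕ, Fin k → ℕ)) (fun q _ => Fin.cons q.1.1 q.2) ?_ ?_ ?_ ?_ ?_
  · intro x hx
    rw [Finset.Nat.mem_antidiagonalTuple] at hx
    rw [Finset.mem_sigma]
    constructor
    · rw [Finset.HasAntidiagonal.mem_antidiagonal]
      rw [Fin.sum_univ_succ] at hx
      exact hx
    · rw [Finset.Nat.mem_antidiagonalTuple]
      rfl
  · intro q hq
    rw [Finset.mem_sigma, Finset.HasAntidiagonal.mem_antidiagonal, Finset.Nat.mem_antidiagonalTuple] at hq
    rw [Finset.Nat.mem_antidiagonalTuple, Fin.sum_cons, hq.2, hq.1]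
  · intro x hx
    exact Fin.cons_self_tail x
  · intro q hq
    rw [Finset.mem_sigma, Finset.HasAntidiagonal.mem_antidiagonal, Finset.Nat.mem_antidiagonalTuple] at hq
    obtain ⟨⟨p1, p2⟩, y⟩ := q
    simp only [Fin.cons_zero, Fin.tail_cons]
    congr 1
    simp only at hq
    simp only [Fin.cons_succ]
    rw [hq.2]
  · intro x hx
    rw [Fin.cons_self_tail]

lemma vandermonde_tuple : ∀ (m : ℕ) (b : Fin m → ℕ) (N : ℕ),
    ∑ j ∈ Finset.Nat.antidiagonalTuple m N, ∏ i, (b i).choose (j i)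
      = (∑ i, b i).choose N := by
  intro m
  induction m with
  | zero =>
    intro b N
    cases N with
    | zero => simp [Finset.Nat.antidiagonalTuple_zero_zero]
    | succ N => simp [Finset.Nat.antidiagonalTuple_zero_succ, Nat.choose_eq_zero_of_lt]
  | succ m ih =>
    intro b N
    rw [sum_adt_succ m N (fun j => ∏ i, (b i).choose (j i))]
    have step : ∀ p ∈ Finset.HasAntidiagonal.antidiagonal N,
        (∑ x ∈ Finset.Nat.antidiagonalTuple m p.2, ∏ i, (b i).choose ((Fin.cons p.1 x : Fin (m+1) → ℕ) i))
          = (b 0).choose p.1 * (∑ i : Fin m, b i.succ).choose p.2 := by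
      intro p _
      rw [← ih (fun i => b i.succ) p.2, Finset.mul_sum]
      apply Finset.sum_congr rfl
      intro x _
      rw [Fin.prod_univ_succ]
      simp [Fin.cons_succ, Fin.cons_zero]
    rw [Finset.sum_congr rfl step, Fin.sum_univ_succ, Nat.add_choose_eq]


lemma vandermonde_tuple_q (m : ℕ) (b : Fin m → ℕ) (N : ℕ) :
    ∑ j ∈ Finset.Nat.antidiagonalTuple m N, ∏ i, ((b i).choose (j i) : ℚ)
      = ((∑ i, b i).choose N : ℚ) := by
  rw [← vandermonde_tuple m b N]
  push_cast
  rfl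

lemma shifted_vandermonde (m N : ℕ) (b : Fin m → ℕ) (t : Fin m)
    (hb : 1 ≤ b t) (hN : 1 ≤ N) :
    ∑ j ∈ Finset.Nat.antidiagonalTuple m N,
        ch ((b t : ℤ) - 1) ((j t : ℤ) - 1) * ∏ i ∈ Finset.univ.erase t, ((b i).choose (j i) : ℚ)
      = (((∑ i, b i) - 1).choose (N - 1) : ℚ) := by
  set φ : (Fin m → ℕ) → (Fin m → ℕ) := fun j i => j i + if i = t then 1 else 0 with hφ
  set b' : Fin m → ℕ := fun i => b i - if i = t then 1 else 0 with hb'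
  have key : ∀ g : Fin m → ℕ, ∑ i, φ g i = (∑ i, g i) + 1 := by
    intro g
    rw [hφ]
    simp only
    rw [Finset.sum_add_distrib, Finset.sum_ite_eq' Finset.univ t (fun _ => 1)]
    simp
  have hsub : (Finset.Nat.antidiagonalTuple m (N-1)).image φ ⊆
      Finset.Nat.antidiagonalTuple m N := by
    intro k hk
    obtain ⟨j, hj, rfl⟩ := Finset.mem_image.mp hk
    rw [Finset.Nat.mem_antidiagonalTuple] at hj ⊢
    rw [key j]
    omega
  have hzero : ∀ k ∈ Finset.Nat.antidiagonalTuple m N,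
      k ∉ (Finset.Nat.antidiagonalTuple m (N-1)).image φ →
      ch ((b t : ℤ) - 1) ((k t : ℤ) - 1)
        * ∏ i ∈ Finset.univ.erase t, ((b i).choose (k i) : ℚ) = 0 := by
    intro k hk hni
    have hkt : k t = 0 := by
      by_contra hkt
      apply hni
      rw [Finset.mem_image]
      set ψk : Fin m → ℕ := fun i => k i - if i = t then 1 else 0 with hψk
      have hψ : φ ψk = k := by
        funext i
        rw [hφ, hψk]
        simp only
        by_cases h : i = t
        · subst h; simp only [eq_self_iff_true, if_true]; omega
        · simp [h]
      refine ⟨ψk, ?_, hψ⟩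
      rw [Finset.Nat.mem_antidiagonalTuple] at hk ⊢
      have h2 := key ψk
      rw [hψ] at h2
      omega
    rw [hkt, Nat.cast_zero, show (0:ℤ) - 1 = -1 by norm_num,
      ch_neg_right (by norm_num : (-1:ℤ) < 0), zero_mul]
  rw [← Finset.sum_subset hsub hzero]
  have hinj : ∀ j ∈ Finset.Nat.antidiagonalTuple m (N-1),
      ∀ j' ∈ Finset.Nat.antidiagonalTuple m (N-1), φ j = φ j' → j = j' := by
    intro j _ j' _ h
    funext i
    have := congrFun h i
    rw [hφ] at this
    simp only at this
    omega
  rw [Finset.sum_image hinj]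
  have hstep : ∀ j ∈ Finset.Nat.antidiagonalTuple m (N-1),
      ch ((b t : ℤ) - 1) (((φ j) t : ℤ) - 1)
        * ∏ i ∈ Finset.univ.erase t, ((b i).choose ((φ j) i) : ℚ)
      = ∏ i, ((b' i).choose (j i) : ℚ) := by
    intro j _
    rw [← Finset.mul_prod_erase Finset.univ (fun i => ((b' i).choose (j i) : ℚ))
      (Finset.mem_univ t)]
    have e1 : (φ j) t = j t + 1 := by rw [hφ]; simp
    have e2 : ch ((b t : ℤ) - 1) (((j t + 1 : ℕ) : ℤ) - 1) = ((b' t).choose (j t) : ℚ) := by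
      rw [show ((j t + 1 : ℕ) : ℤ) - 1 = ((j t : ℕ) : ℤ) by push_cast; ring,
        show ((b t : ℕ) : ℤ) - 1 = ((b t - 1 : ℕ) : ℤ) by omega, ch_natCast_s2]
      rw [hb']
      simp
    rw [e1, e2]
    congr 1
    apply Finset.prod_congr rfl
    intro i hi
    have hit : i ≠ t := Finset.ne_of_mem_erase hi
    rw [hφ, hb']
    simp [hit]
  rw [Finset.sum_congr rfl hstep, vandermonde_tuple_q]
  congr 2
  have hb'sum : ∀ i : Fin m, b' i + (if i = t then 1 else 0) = b i := by
    intro i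
    rw [hb']
    by_cases h : i = t
    · subst h; simp only [eq_self_iff_true, if_true]; omega
    · simp [h]
  have : (∑ i, b' i) + 1 = ∑ i, b i := by
    rw [← Finset.sum_congr rfl (fun i _ => hb'sum i), Finset.sum_add_distrib,
      Finset.sum_ite_eq' Finset.univ t (fun _ => 1)]
    simp
  omega

lemma weighted_tuple (m N : ℕ) (b : Fin m → ℕ) (t : Fin m) :
    ∑ j ∈ Finset.Nat.antidiagonalTuple m N, (∏ i, ((b i).choose (j i) : ℚ)) * (j t : ℚ)
      = (b t : ℚ) * ch ((∑ i, (b i : ℤ)) - 1) ((N : ℤ) - 1) := by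
  by_cases hbt : b t = 0
  · rw [hbt, Nat.cast_zero, zero_mul]
    apply Finset.sum_eq_zero
    intro j _
    rcases Nat.eq_zero_or_pos (j t) with h | h
    · rw [h, Nat.cast_zero, mul_zero]
    · rw [Finset.prod_eq_zero (Finset.mem_univ t) (by
        rw [hbt, Nat.choose_eq_zero_of_lt h, Nat.cast_zero]), zero_mul]
  · have hb : 1 ≤ b t := Nat.one_le_iff_ne_zero.mpr hbt
    have hterm : ∀ j ∈ Finset.Nat.antidiagonalTuple m N,
        (∏ i, ((b i).choose (j i) : ℚ)) * (j t : ℚ)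
          = (b t : ℚ) * (ch ((b t : ℤ) - 1) ((j t : ℤ) - 1)
              * ∏ i ∈ Finset.univ.erase t, ((b i).choose (j i) : ℚ)) := by
      intro j _
      rw [← Finset.mul_prod_erase Finset.univ (fun i => ((b i).choose (j i) : ℚ))
        (Finset.mem_univ t)]
      have h1 := mul_ch (b t : ℤ) (j t : ℤ)
      rw [ch_natCast_s2] at h1
      push_cast at h1 ⊢
      linear_combination (∏ i ∈ Finset.univ.erase t, ((b i).choose (j i) : ℚ)) * h1
    rw [Finset.sum_congr rfl hterm, ← Finset.mul_sum]
    congr 1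
    rcases Nat.eq_zero_or_pos N with hN | hN
    · subst hN
      rw [Finset.Nat.antidiagonalTuple_zero_right, Finset.sum_singleton]
      simp only [Pi.zero_apply, Nat.cast_zero, zero_sub]
      rw [ch_neg_right (show (-1:ℤ) < 0 by norm_num),
        ch_neg_right (show (-1:ℤ) < 0 by norm_num), zero_mul]
    · rw [shifted_vandermonde m N b t hb hN]
      have hB : 1 ≤ ∑ i, b i :=
        le_trans hb (Finset.single_le_sum (fun i _ => Nat.zero_le (b i)) (Finset.mem_univ t))
      rw [show (∑ i, ((b i : ℕ) : ℤ)) - 1 = (((∑ i, b i) - 1 : ℕ) : ℤ) by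
          rw [Nat.cast_sub hB]; push_cast; ring,
        show ((N : ℕ) : ℤ) - 1 = ((N - 1 : ℕ) : ℤ) by omega, ch_natCast_s2]



theorem stmt2 (m n : ℕ) (hm : 1 ≤ m) (a c : Fin m → ℕ) (x : Fin m → ℚ) :
    (∑ k ∈ Finset.Nat.antidiagonalTuple m n, (∏ i, ch (a i) (k i) * ch (k i) (c i)) * (∑ i, x i * (k i : ℚ))) * ((∑ i, (a i : ℚ)) - (∑ i, (c i : ℚ)))
      = ch ((∑ i, (a i : ℤ)) - ∑ i, (c i : ℤ)) ((n : ℤ) - ∑ i, (c i : ℤ)) * (∏ i, ch (a i) (c i))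
        * (((n : ℚ) - (∑ i, (c i : ℚ))) * (∑ i, x i * (a i : ℚ)) + ((∑ i, (a i : ℚ)) - (n : ℚ)) * (∑ i, x i * (c i : ℚ))) := by
  by_cases hca : ∀ i, c i ≤ a i
  · have hAC : ∑ i, c i ≤ ∑ i, a i := Finset.sum_le_sum (fun i _ => hca i)
    have hcastc : ∑ i, ((c i : ℕ) : ℤ) = ((∑ i, c i : ℕ) : ℤ) := by push_cast; rfl
    have hcasta : ∑ i, ((a i : ℕ) : ℤ) = ((∑ i, a i : ℕ) : ℤ) := by push_cast; rfl
    have hcastcq : ∑ i, ((c i : ℕ) : ℚ) = ((∑ i, c i : ℕ) : ℚ) := by push_cast; rfl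
    have hcastaq : ∑ i, ((a i : ℕ) : ℚ) = ((∑ i, a i : ℕ) : ℚ) := by push_cast; rfl
    by_cases hn : ∑ i, c i ≤ n
    · -- main case
      set B : ℕ := (∑ i, a i) - (∑ i, c i) with hB
      set N : ℕ := n - (∑ i, c i) with hN
      set b : Fin m → ℕ := fun i => a i - c i with hb
      have hbc : ∀ i, b i + c i = a i := fun i => Nat.sub_add_cancel (hca i)
      have hbsum : ∑ i, b i = B := by
        have h1 : (∑ i, b i) + (∑ i, c i) = ∑ i, a i := by
          rw [← Finset.sum_add_distrib]
          exact Finset.sum_congr rfl (fun i _ => hbc i)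
        omega
      set P : ℚ := ∏ i, ch (a i) (c i) with hP
      set C1 : ℚ := ∑ i, x i * (c i : ℚ) with hC1
      set φ : (Fin m → ℕ) → (Fin m → ℕ) := fun j i => j i + c i with hφ
      have hsub : (Finset.Nat.antidiagonalTuple m N).image φ ⊆
          Finset.Nat.antidiagonalTuple m n := by
        intro k hk
        obtain ⟨j, hj, rfl⟩ := Finset.mem_image.mp hk
        rw [Finset.Nat.mem_antidiagonalTuple] at hj ⊢
        rw [hφ]
        simp only
        rw [Finset.sum_add_distrib, hj]
        omega
      have hzero : ∀ k ∈ Finset.Nat.antidiagonalTuple m n,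
          k ∉ (Finset.Nat.antidiagonalTuple m N).image φ →
          (∏ i, ch (a i) (k i) * ch (k i) (c i)) * (∑ i, x i * (k i : ℚ)) = 0 := by
        intro k hk hni
        have hex : ∃ i, k i < c i := by
          by_contra hfa
          push_neg at hfa
          apply hni
          rw [Finset.mem_image]
          set ψk : Fin m → ℕ := fun i => k i - c i with hψk
          have hψ : φ ψk = k := by
            funext i
            rw [hφ, hψk]
            simp only
            exact Nat.sub_add_cancel (hfa i)
          refine ⟨ψk, ?_, hψ⟩
          rw [Finset.Nat.mem_antidiagonalTuple] at hk ⊢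
          have h2 : (∑ i, ψk i) + (∑ i, c i) = ∑ i, k i := by
            rw [← Finset.sum_add_distrib]
            exact Finset.sum_congr rfl (fun i _ => Nat.sub_add_cancel (hfa i))
          omega
        obtain ⟨i0, hi0⟩ := hex
        rw [Finset.prod_eq_zero (Finset.mem_univ i0)
          (by rw [ch_lt (show ((k i0 : ℕ) : ℤ) < ((c i0 : ℕ) : ℤ) by exact_mod_cast hi0),
            mul_zero]), zero_mul]
      rw [← Finset.sum_subset hsub hzero]
      have hinj : ∀ j ∈ Finset.Nat.antidiagonalTuple m N,
          ∀ j' ∈ Finset.Nat.antidiagonalTuple m N, φ j = φ j' → j = j' := by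
        intro j _ j' _ h
        funext i
        have := congrFun h i
        rw [hφ] at this
        simp only at this
        omega
      rw [Finset.sum_image hinj]
      have hstep : ∀ j ∈ Finset.Nat.antidiagonalTuple m N,
          (∏ i, ch (a i) ((φ j) i) * ch ((φ j) i) (c i)) * (∑ i, x i * ((φ j) i : ℚ))
            = P * ((∏ i, ((b i).choose (j i) : ℚ)) * ((∑ i, x i * (j i : ℚ)) + C1)) := by
        intro j _
        have hprod : (∏ i, ch (a i) ((φ j) i) * ch ((φ j) i) (c i))
            = P * ∏ i, ((b i).choose (j i) : ℚ) := by
          rw [hP, ← Finset.prod_mul_distrib]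
          apply Finset.prod_congr rfl
          intro i _
          rw [ch_trisect]
          congr 1
          rw [show ((a i : ℕ) : ℤ) - ((c i : ℕ) : ℤ) = ((b i : ℕ) : ℤ) by
              rw [hb]; simp only; have := hca i; omega,
            show (((φ j) i : ℕ) : ℤ) - ((c i : ℕ) : ℤ) = ((j i : ℕ) : ℤ) by
              rw [hφ]; simp only; push_cast; ring,
            ch_natCast_s2]
        have hw : (∑ i, x i * ((φ j) i : ℚ)) = (∑ i, x i * (j i : ℚ)) + C1 := by
          rw [hC1, ← Finset.sum_add_distrib]
          apply Finset.sum_congr rfl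
          intro i _
          rw [hφ]
          simp only
          push_cast
          ring
        rw [hprod, hw]
        ring
      rw [Finset.sum_congr rfl hstep]
      -- now compute the two sums
      have hbz : ∑ i, (b i : ℤ) = ((B : ℕ) : ℤ) := by rw [← hbsum]; push_cast; rfl
      have hT1 : ∑ j ∈ Finset.Nat.antidiagonalTuple m N,
          (∏ i, ((b i).choose (j i) : ℚ)) * (∑ i, x i * (j i : ℚ))
            = (∑ i, x i * (b i : ℚ)) * ch ((B : ℤ) - 1) ((N : ℤ) - 1) := by
        calc ∑ j ∈ Finset.Nat.antidiagonalTuple m N,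
              (∏ i, ((b i).choose (j i) : ℚ)) * (∑ i, x i * (j i : ℚ))
            = ∑ j ∈ Finset.Nat.antidiagonalTuple m N,
              ∑ i, x i * ((∏ i', ((b i').choose (j i') : ℚ)) * (j i : ℚ)) := by
              apply Finset.sum_congr rfl
              intro j _
              rw [Finset.mul_sum]
              apply Finset.sum_congr rfl
              intro i _
              ring
          _ = ∑ i, ∑ j ∈ Finset.Nat.antidiagonalTuple m N,
              x i * ((∏ i', ((b i').choose (j i') : ℚ)) * (j i : ℚ)) := Finset.sum_comm
          _ = ∑ i, x i * ((b i : ℚ) * ch ((B : ℤ) - 1) ((N : ℤ) - 1)) := by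
              apply Finset.sum_congr rfl
              intro i _
              rw [← Finset.mul_sum, weighted_tuple m N b i, hbz]
          _ = (∑ i, x i * (b i : ℚ)) * ch ((B : ℤ) - 1) ((N : ℤ) - 1) := by
              rw [Finset.sum_mul]
              apply Finset.sum_congr rfl
              intro i _
              ring
      have hT2 : ∑ j ∈ Finset.Nat.antidiagonalTuple m N, ∏ i, ((b i).choose (j i) : ℚ)
          = (B.choose N : ℚ) := by rw [vandermonde_tuple_q, hbsum]
      have hsplit : ∑ j ∈ Finset.Nat.antidiagonalTuple m N,
          P * ((∏ i, ((b i).choose (j i) : ℚ)) * ((∑ i, x i * (j i : ℚ)) + C1))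
            = P * (((∑ i, x i * (b i : ℚ)) * ch ((B : ℤ) - 1) ((N : ℤ) - 1))
                + (B.choose N : ℚ) * C1) := by
        rw [← Finset.mul_sum]
        congr 1
        rw [← hT1, ← hT2, Finset.sum_mul, ← Finset.sum_add_distrib]
        exact Finset.sum_congr rfl (fun j _ => by ring)
      rw [hsplit]
      have hchBN : ch ((∑ i, (a i : ℤ)) - ∑ i, (c i : ℤ)) ((n : ℤ) - ∑ i, (c i : ℤ))
          = (B.choose N : ℚ) := by
        rw [show (∑ i, ((a i : ℕ) : ℤ)) - ∑ i, ((c i : ℕ) : ℤ) = ((B : ℕ) : ℤ) by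
            rw [hcasta, hcastc]; omega,
          show ((n : ℕ) : ℤ) - ∑ i, ((c i : ℕ) : ℤ) = ((N : ℕ) : ℤ) by rw [hcastc]; omega,
          ch_natCast_s2]
      have hkey : (B : ℚ) * ch ((B : ℤ) - 1) ((N : ℤ) - 1) = (N : ℚ) * (B.choose N : ℚ) := by
        have h := mul_ch (B : ℤ) (N : ℤ)
        rw [ch_natCast_s2] at h
        push_cast at h
        linarith
      have hq1 : (∑ i, (a i : ℚ)) - (∑ i, (c i : ℚ)) = (B : ℚ) := by
        rw [hcastaq, hcastcq, hB, Nat.cast_sub hAC]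
      have hq2 : (n : ℚ) - (∑ i, (c i : ℚ)) = (N : ℚ) := by
        rw [hcastcq, hN, Nat.cast_sub hn]
      have hq4 : (∑ i, (a i : ℚ)) - (n : ℚ) = (B : ℚ) - (N : ℚ) := by
        rw [hcastaq, hB, hN, Nat.cast_sub hAC, Nat.cast_sub hn]
        ring
      have hq3 : (∑ i, x i * (a i : ℚ)) = (∑ i, x i * (b i : ℚ)) + C1 := by
        rw [hC1, ← Finset.sum_add_distrib]
        apply Finset.sum_congr rfl
        intro i _
        rw [← hbc i]
        push_cast
        ring
      rw [hchBN, hq1, hq2, hq4, hq3]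
      linear_combination (P * (∑ i, x i * (b i : ℚ))) * hkey
    · -- n < ∑ c
      push_neg at hn
      have hL : ∑ k ∈ Finset.Nat.antidiagonalTuple m n,
          (∏ i, ch (a i) (k i) * ch (k i) (c i)) * (∑ i, x i * (k i : ℚ)) = 0 := by
        apply Finset.sum_eq_zero
        intro k hk
        rw [Finset.Nat.mem_antidiagonalTuple] at hk
        have hex : ∃ i, k i < c i := by
          by_contra hfa
          push_neg at hfa
          have := Finset.sum_le_sum (fun i (_ : i ∈ Finset.univ) => hfa i)
          omega
        obtain ⟨i0, hi0⟩ := hex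
        rw [Finset.prod_eq_zero (Finset.mem_univ i0)
          (by rw [ch_lt (show ((k i0 : ℕ) : ℤ) < ((c i0 : ℕ) : ℤ) by exact_mod_cast hi0),
            mul_zero]), zero_mul]
      rw [hL, zero_mul,
        show ch ((∑ i, (a i : ℤ)) - ∑ i, (c i : ℤ)) ((n : ℤ) - ∑ i, (c i : ℤ)) = 0 from
          ch_neg_right (by rw [hcastc]; omega), zero_mul, zero_mul]
  · push_neg at hca
    obtain ⟨i0, hi0⟩ := hca
    have hL : ∑ k ∈ Finset.Nat.antidiagonalTuple m n,
        (∏ i, ch (a i) (k i) * ch (k i) (c i)) * (∑ i, x i * (k i : ℚ)) = 0 := by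
      apply Finset.sum_eq_zero
      intro k _
      have hz : ch (a i0) (k i0) * ch (k i0) (c i0) = 0 := by
        rcases le_or_gt (c i0) (k i0) with h | h
        · rw [ch_lt (show ((a i0 : ℕ) : ℤ) < ((k i0 : ℕ) : ℤ) by
            exact_mod_cast lt_of_lt_of_le hi0 h), zero_mul]
        · rw [ch_lt (show ((k i0 : ℕ) : ℤ) < ((c i0 : ℕ) : ℤ) by exact_mod_cast h), mul_zero]
      rw [Finset.prod_eq_zero (Finset.mem_univ i0) hz, zero_mul]
    rw [hL, zero_mul,
      Finset.prod_eq_zero (Finset.mem_univ i0)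
        (ch_lt (show ((c i0 : ℕ) : ℤ) > ((a i0 : ℕ) : ℤ) by exact_mod_cast hi0))]
    ring
end

section
/- For integers m ≥ 1, n ≥ 0, sequences of nonnegative integers a_i and c_i, and rationals x_i, the sum over all tuples (k_1,...,k_m) with ∑ k_i = n of [∏ C(a_i,k_i)C(k_i,c_i)] * (∑ x_i k_i^2), multiplied by (A_0-C_0)(A_0-C_0-1), equals C(A_0-C_0, n-C_0) * [∏ C(a_i,c_i)] * { (n-C_0)[(n-C_0-1) A_{1,2} + (A_0-n)(A_1 - C_1 + 2 S_{1,1})] + (A_0-n)(A_0-n-1) C_{1,2} }. -/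
open Finset

lemma ch_neg {n k : ℤ} (h : k < 0) : ch n k = 0 := by simp [ch]; omega

lemma ch_nat (b k : ℕ) : ch b k = (b.choose k : ℚ) := by
  unfold ch
  by_cases h : k ≤ b
  · simp [h]
  · rw [if_neg (by push_cast; omega), Nat.choose_eq_zero_of_lt (by omega), Nat.cast_zero]

lemma ch_sub_cast (a d k : ℕ) :
    ch ((a:ℤ) - d) ((k:ℤ) - d) = if d ≤ k ∧ k ≤ a then ((a-d).choose (k-d) : ℚ) else 0 := by
  unfold ch
  by_cases h : d ≤ k ∧ k ≤ a
  · rw [if_pos (by omega), if_pos h]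
    congr 2 <;> omega
  · rw [if_neg (by omega), if_neg h]

lemma chP1 (b k : ℤ) : (k:ℚ) * ch b k = (b:ℚ) * ch (b-1) (k-1) := by
  by_cases h : 1 ≤ k ∧ k ≤ b
  · obtain ⟨h1, h2⟩ := h
    unfold ch
    rw [if_pos ⟨by omega, h2⟩, if_pos ⟨by omega, by omega⟩]
    have hb1 : 1 ≤ b := le_trans h1 h2
    obtain ⟨bn, rfl⟩ : ∃ bn : ℕ, b = (bn:ℤ)+1 := ⟨(b-1).toNat, by omega⟩
    obtain ⟨kn, rfl⟩ : ∃ kn : ℕ, k = (kn:ℤ)+1 := ⟨(k-1).toNat, by omega⟩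
    have : ((bn:ℤ)+1).toNat = bn+1 := by omega
    rw [this]
    have : ((kn:ℤ)+1).toNat = kn+1 := by omega
    rw [this]
    have : ((bn:ℤ)+1-1).toNat = bn := by omega
    rw [this]
    have : ((kn:ℤ)+1-1).toNat = kn := by omega
    rw [this]
    have := Nat.add_one_mul_choose_eq bn kn
    have hq : ((bn+1) * Nat.choose bn kn : ℚ) = (Nat.choose (bn+1) (kn+1) * (kn+1) : ℚ) := by
      exact_mod_cast congrArg (Nat.cast : ℕ → ℚ) this
    push_cast at hq ⊢
    linarith [hq]
  · have hL : ch b k = 0 ∨ (k:ℚ) = 0 := by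
      by_cases hk : k = 0
      · right; simp [hk]
      · left; unfold ch; rw [if_neg (by omega)]
    have hR : ch (b-1) (k-1) = 0 := by
      unfold ch; rw [if_neg (by omega)]
    rcases hL with h' | h' <;> rw [hR, h'] <;> ring

lemma chP2 (b k : ℤ) : (k:ℚ) * ((k:ℚ)-1) * ch b k = (b:ℚ) * ((b:ℚ)-1) * ch (b-2) (k-2) := by
  have h1 := chP1 b k
  have h2 := chP1 (b-1) (k-1)
  push_cast at h2
  have e1 : (k:ℚ) * ((k:ℚ)-1) * ch b k = ((k:ℚ)-1) * ((k:ℚ) * ch b k) := by ring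
  rw [e1, h1]
  have e2 : (b:ℚ) * (((k:ℚ)-1) * ch (b-1) (k-1)) = (b:ℚ)*((b:ℚ)-1) * ch (b-1-1) (k-1-1) := by
    rw [h2]; ring
  calc ((k:ℚ)-1) * ((b:ℚ) * ch (b-1) (k-1)) = (b:ℚ) * (((k:ℚ)-1) * ch (b-1) (k-1)) := by ring
    _ = (b:ℚ)*((b:ℚ)-1) * ch (b-1-1) (k-1-1) := e2
    _ = (b:ℚ)*((b:ℚ)-1) * ch (b-2) (k-2) := by norm_num [sub_sub]

lemma tri (a c k : ℕ) : ch a k * ch k c = ch a c * ch ((a:ℤ)-c) ((k:ℤ)-c) := by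
  rw [ch_nat, ch_nat, ch_nat, ch_sub_cast]
  by_cases h : c ≤ k ∧ k ≤ a
  · rw [if_pos h]
    exact_mod_cast congrArg (Nat.cast : ℕ → ℚ) (Nat.choose_mul (n := a) h.1)
  · rw [if_neg h, mul_zero]
    rcases not_and_or.mp h with h' | h'
    · rw [Nat.choose_eq_zero_of_lt (show k < c by omega), Nat.cast_zero, mul_zero]
    · rw [Nat.choose_eq_zero_of_lt (show a < k by omega), Nat.cast_zero, zero_mul]

-- shifted Vandermonde
lemma vd : ∀ (d b e n : ℕ), d ≤ b →
    ∑ pq ∈ antidiagonal n, ch ((b:ℤ)-d) ((pq.1:ℤ)-d) * ch e pq.2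
      = ch ((b:ℤ)+e-d) ((n:ℤ)-d) := by
  intro d
  induction d with
  | zero =>
    intro b e n _
    simp only [Nat.cast_zero, sub_zero]
    rw [show ((b:ℤ)+e) = ((b+e:ℕ):ℤ) by push_cast; ring, ch_nat, Nat.add_choose_eq]
    push_cast
    exact Finset.sum_congr rfl fun pq _ => by rw [ch_nat, ch_nat]
  | succ d ih =>
    intro b e n hdb
    obtain ⟨b', rfl⟩ : ∃ b', b = b'+1 := ⟨b-1, by omega⟩
    cases n with
    | zero =>
      rw [Finset.Nat.antidiagonal_zero, Finset.sum_singleton,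
        show ((0:ℕ):ℤ) - ((d+1:ℕ):ℤ) = -((d:ℤ)+1) by push_cast; ring,
        ch_neg (show -((d:ℤ)+1) < 0 by omega), zero_mul,
        ch_neg (show -((d:ℤ)+1) < 0 by omega)]
    | succ n' =>
      rw [Finset.Nat.antidiagonal_succ, Finset.sum_cons, Finset.sum_map,
        show ((0:ℕ):ℤ) - ((d+1:ℕ):ℤ) = -((d:ℤ)+1) by push_cast; ring,
        ch_neg (show -((d:ℤ)+1) < 0 by omega), zero_mul, zero_add]
      have key : ∑ pq ∈ antidiagonal n',
            ch (((b'+1:ℕ):ℤ) - ((d+1:ℕ):ℤ))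
              ((((Function.Embedding.prodMap ⟨Nat.succ, Nat.succ_injective⟩ (Function.Embedding.refl ℕ)) pq).1:ℤ) - ((d+1:ℕ):ℤ))
              * ch e ((Function.Embedding.prodMap ⟨Nat.succ, Nat.succ_injective⟩ (Function.Embedding.refl ℕ)) pq).2
          = ∑ pq ∈ antidiagonal n', ch ((b':ℤ)-d) ((pq.1:ℤ)-d) * ch e pq.2 := by
        refine Finset.sum_congr rfl fun pq _ => ?_
        congr 2 <;> simp <;> push_cast <;> ring
      rw [key, ih b' e n' (by omega)]
      congr 1 <;> push_cast <;> ring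

lemma vd' (d b e n : ℕ) (hde : d ≤ e) :
    ∑ pq ∈ antidiagonal n, ch b pq.1 * ch ((e:ℤ)-d) ((pq.2:ℤ)-d)
      = ch ((b:ℤ)+e-d) ((n:ℤ)-d) := by
  have := Finset.Nat.sum_antidiagonal_swap
    (f := fun pq : ℕ × ℕ => ch ((e:ℤ)-d) ((pq.1:ℤ)-d) * ch b pq.2) (n := n)
  simp only [Prod.fst_swap, Prod.snd_swap] at this
  calc ∑ pq ∈ antidiagonal n, ch b pq.1 * ch ((e:ℤ)-d) ((pq.2:ℤ)-d)
      = ∑ pq ∈ antidiagonal n, ch ((e:ℤ)-d) ((pq.2:ℤ)-d) * ch b pq.1 := by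
        exact Finset.sum_congr rfl fun pq _ => mul_comm _ _
    _ = ch ((e:ℤ)+b-d) ((n:ℤ)-d) := by rw [this, vd d e b n hde]
    _ = ch ((b:ℤ)+e-d) ((n:ℤ)-d) := by ring_nf

lemma AT_sum {M : Type*} [AddCommMonoid M] (m n : ℕ) (f : (Fin (m+1) → ℕ) → M) :
    ∑ k ∈ Finset.Nat.antidiagonalTuple (m+1) n, f k
      = ∑ pq ∈ antidiagonal n, ∑ t ∈ Finset.Nat.antidiagonalTuple m pq.2, f (Fin.cons pq.1 t) := by
  rw [← Finset.sum_sigma (antidiagonal n) (fun pq => Finset.Nat.antidiagonalTuple m pq.2)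
    (fun x => f (Fin.cons x.1.1 x.2))]
  refine (Finset.sum_nbij' (i := fun (x : Σ _ : ℕ × ℕ, (Fin m → ℕ)) => Fin.cons x.1.1 x.2)
      (j := fun (k : Fin (m+1) → ℕ) => (⟨(k 0, ∑ i, k (Fin.succ i)), Fin.tail k⟩ :
        Σ _ : ℕ × ℕ, (Fin m → ℕ))) ?_ ?_ ?_ ?_ ?_).symm
  · intro x hx
    rw [Finset.mem_sigma, Finset.HasAntidiagonal.mem_antidiagonal, Finset.Nat.mem_antidiagonalTuple] at hx
    rw [Finset.Nat.mem_antidiagonalTuple, Fin.sum_univ_succ]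
    simp only [Fin.cons_zero, Fin.cons_succ]
    rw [hx.2, hx.1]
  · intro k hk
    rw [Finset.Nat.mem_antidiagonalTuple] at hk
    refine Finset.mem_sigma.mpr ⟨Finset.HasAntidiagonal.mem_antidiagonal.mpr ?_, Finset.Nat.mem_antidiagonalTuple.mpr rfl⟩
    rw [← hk, Fin.sum_univ_succ]
  · intro x hx
    rw [Finset.mem_sigma, Finset.Nat.mem_antidiagonalTuple] at hx
    refine Sigma.ext ?_ ?_
    · simp only [Fin.cons_zero, Fin.cons_succ]
      rw [hx.2]
    · simp [Fin.tail, Fin.cons_succ]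
  · intro k _
    simp [Fin.cons_self_tail, Fin.tail]
  · intro x _
    rfl

lemma tv0 : ∀ (m : ℕ) (b : Fin m → ℕ) (n : ℕ),
    ∑ k ∈ Finset.Nat.antidiagonalTuple m n, ∏ i, ch (b i) (k i)
      = ch ((∑ i, b i : ℕ) : ℤ) n := by
  intro m
  induction m with
  | zero =>
    intro b n
    cases n with
    | zero =>
      rw [Finset.Nat.antidiagonalTuple_zero_zero, Finset.sum_singleton]
      simp [ch]
    | succ n' =>
      rw [Finset.Nat.antidiagonalTuple_zero_succ, Finset.sum_empty]
      simp only [Finset.univ_eq_empty, Finset.sum_empty, Nat.cast_zero]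
      unfold ch
      rw [if_neg (by push_cast; omega)]
  | succ m ih =>
    intro b n
    rw [AT_sum]
    have step : ∀ pq ∈ antidiagonal n,
        (∑ t ∈ Finset.Nat.antidiagonalTuple m pq.2, ∏ i, ch (b i) ((Fin.cons pq.1 t : Fin (m+1) → ℕ) i))
        = ch (b 0) pq.1 * ch ((∑ i, b (Fin.succ i) : ℕ) : ℤ) pq.2 := by
      intro pq _
      rw [← ih (fun i => b (Fin.succ i)) pq.2, Finset.mul_sum]
      refine Finset.sum_congr rfl fun t _ => ?_
      rw [Fin.prod_univ_succ]
      simp [Fin.cons_zero, Fin.cons_succ]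
    rw [Finset.sum_congr rfl step]
    have := vd 0 (b 0) (∑ i, b (Fin.succ i)) n (by omega)
    simp only [Nat.cast_zero, sub_zero] at this
    rw [this]
    congr 1
    rw [Fin.sum_univ_succ]
    push_cast
    ring

lemma tv1 : ∀ (m : ℕ) (b : Fin m → ℕ) (x : Fin m → ℚ) (n : ℕ),
    ∑ k ∈ Finset.Nat.antidiagonalTuple m n, (∏ i, ch (b i) (k i)) * (∑ i, x i * (k i : ℚ))
      = (∑ i, x i * (b i : ℚ)) * ch (((∑ i, b i : ℕ) : ℤ) - 1) ((n:ℤ) - 1) := by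
  intro m
  induction m with
  | zero => intro b x n; simp
  | succ m ih =>
    intro b x n
    rw [AT_sum]
    -- inner sums
    have step : ∀ pq ∈ antidiagonal n,
        (∑ t ∈ Finset.Nat.antidiagonalTuple m pq.2,
          (∏ i, ch (b i) ((Fin.cons pq.1 t : Fin (m+1) → ℕ) i)) * (∑ i, x i * ((Fin.cons pq.1 t : Fin (m+1) → ℕ) i : ℚ)))
        = x 0 * ((pq.1:ℚ) * ch (b 0) pq.1) * ch ((∑ i, b (Fin.succ i) : ℕ) : ℤ) pq.2
          + ch (b 0) pq.1 * ((∑ i, x (Fin.succ i) * (b (Fin.succ i) : ℚ))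
              * ch (((∑ i, b (Fin.succ i) : ℕ) : ℤ) - 1) ((pq.2:ℤ) - 1)) := by
      intro pq _
      have expand : ∀ t ∈ Finset.Nat.antidiagonalTuple m pq.2,
          (∏ i, ch (b i) ((Fin.cons pq.1 t : Fin (m+1) → ℕ) i)) * (∑ i, x i * ((Fin.cons pq.1 t : Fin (m+1) → ℕ) i : ℚ))
          = x 0 * (pq.1:ℚ) * (ch (b 0) pq.1 * ∏ i, ch (b (Fin.succ i)) (t i))
            + ch (b 0) pq.1 * ((∏ i, ch (b (Fin.succ i)) (t i)) * (∑ i, x (Fin.succ i) * (t i : ℚ))) := by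
        intro t _
        rw [Fin.prod_univ_succ, Fin.sum_univ_succ]
        simp only [Fin.cons_zero, Fin.cons_succ]
        ring
      rw [Finset.sum_congr rfl expand, Finset.sum_add_distrib, ← Finset.mul_sum, ← Finset.mul_sum,
        tv0 m (fun i => b (Fin.succ i)) pq.2, ← Finset.mul_sum,
        ih (fun i => b (Fin.succ i)) (fun i => x (Fin.succ i)) pq.2]
      ring
    rw [Finset.sum_congr rfl step, Finset.sum_add_distrib]
    -- first sum
    have s1 : ∑ pq ∈ antidiagonal n,
        x 0 * ((pq.1:ℚ) * ch (b 0) pq.1) * ch ((∑ i, b (Fin.succ i) : ℕ) : ℤ) pq.2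
        = x 0 * (b 0 : ℚ) * ch (((b 0 : ℕ):ℤ) + (∑ i, b (Fin.succ i) : ℕ) - 1) ((n:ℤ) - 1) := by
      have e : ∀ pq ∈ antidiagonal n,
          x 0 * ((pq.1:ℚ) * ch (b 0) pq.1) * ch ((∑ i, b (Fin.succ i) : ℕ) : ℤ) pq.2
          = (x 0 * (b 0:ℚ)) * (ch (((b 0:ℕ):ℤ)-1) ((pq.1:ℤ)-1) * ch ((∑ i, b (Fin.succ i) : ℕ) : ℤ) pq.2) := by
        intro pq _
        have h := chP1 ((b 0 : ℕ) : ℤ) ((pq.1 : ℕ) : ℤ)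
        push_cast at h
        rw [h]
        ring
      rw [Finset.sum_congr rfl e, ← Finset.mul_sum]
      by_cases hb : 1 ≤ b 0
      · have h := vd 1 (b 0) (∑ i, b (Fin.succ i)) n hb
        push_cast at h ⊢
        rw [h]
      · have hb0 : b 0 = 0 := by omega
        rw [hb0]
        simp only [Nat.cast_zero, mul_zero, zero_mul]
    -- second sum
    have s2 : ∑ pq ∈ antidiagonal n,
        ch (b 0) pq.1 * ((∑ i, x (Fin.succ i) * (b (Fin.succ i) : ℚ))
            * ch (((∑ i, b (Fin.succ i) : ℕ) : ℤ) - 1) ((pq.2:ℤ) - 1))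
        = (∑ i, x (Fin.succ i) * (b (Fin.succ i) : ℚ))
            * ch (((b 0 : ℕ):ℤ) + (∑ i, b (Fin.succ i) : ℕ) - 1) ((n:ℤ) - 1) := by
      have e : ∀ pq ∈ antidiagonal n,
          ch (b 0) pq.1 * ((∑ i, x (Fin.succ i) * (b (Fin.succ i) : ℚ))
            * ch (((∑ i, b (Fin.succ i) : ℕ) : ℤ) - 1) ((pq.2:ℤ) - 1))
          = (∑ i, x (Fin.succ i) * (b (Fin.succ i) : ℚ))
            * (ch (b 0) pq.1 * ch (((∑ i, b (Fin.succ i) : ℕ) : ℤ) - 1) ((pq.2:ℤ) - 1)) := by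
        intro pq _; ring
      rw [Finset.sum_congr rfl e, ← Finset.mul_sum]
      by_cases hB : 1 ≤ ∑ i, b (Fin.succ i)
      · have := vd' 1 (b 0) (∑ i, b (Fin.succ i)) n hB
        push_cast at this ⊢
        rw [this]
      · have hB0 : ∑ i, b (Fin.succ i) = 0 := by omega
        have hx0 : (∑ i, x (Fin.succ i) * (b (Fin.succ i) : ℚ)) = 0 := by
          rw [Finset.sum_eq_zero]
          intro i _
          have : b (Fin.succ i) = 0 := by
            have := Finset.sum_eq_zero_iff.mp hB0 i (Finset.mem_univ i)
            exact this
          rw [this]; norm_num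
        rw [hx0, zero_mul, zero_mul]
    rw [s1, s2, Fin.sum_univ_succ (f := fun i => x i * (b i : ℚ)), Fin.sum_univ_succ (f := fun i => (b i : ℕ))]
    push_cast
    ring

lemma tv2 : ∀ (m : ℕ) (b : Fin m → ℕ) (x : Fin m → ℚ) (n : ℕ),
    ∑ k ∈ Finset.Nat.antidiagonalTuple m n,
        (∏ i, ch (b i) (k i)) * (∑ i, x i * ((k i : ℚ) * ((k i : ℚ) - 1)))
      = (∑ i, x i * ((b i : ℚ) * ((b i : ℚ) - 1))) * ch (((∑ i, b i : ℕ) : ℤ) - 2) ((n:ℤ) - 2) := by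
  intro m
  induction m with
  | zero => intro b x n; simp
  | succ m ih =>
    intro b x n
    rw [AT_sum]
    have step : ∀ pq ∈ antidiagonal n,
        (∑ t ∈ Finset.Nat.antidiagonalTuple m pq.2,
          (∏ i, ch (b i) ((Fin.cons pq.1 t : Fin (m+1) → ℕ) i))
            * (∑ i, x i * (((Fin.cons pq.1 t : Fin (m+1) → ℕ) i : ℚ) * (((Fin.cons pq.1 t : Fin (m+1) → ℕ) i : ℚ) - 1))))
        = x 0 * ((pq.1:ℚ) * ((pq.1:ℚ) - 1) * ch (b 0) pq.1) * ch ((∑ i, b (Fin.succ i) : ℕ) : ℤ) pq.2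
          + ch (b 0) pq.1 * ((∑ i, x (Fin.succ i) * ((b (Fin.succ i) : ℚ) * ((b (Fin.succ i) : ℚ) - 1)))
              * ch (((∑ i, b (Fin.succ i) : ℕ) : ℤ) - 2) ((pq.2:ℤ) - 2)) := by
      intro pq _
      have expand : ∀ t ∈ Finset.Nat.antidiagonalTuple m pq.2,
          (∏ i, ch (b i) ((Fin.cons pq.1 t : Fin (m+1) → ℕ) i))
            * (∑ i, x i * (((Fin.cons pq.1 t : Fin (m+1) → ℕ) i : ℚ) * (((Fin.cons pq.1 t : Fin (m+1) → ℕ) i : ℚ) - 1)))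
          = x 0 * ((pq.1:ℚ) * ((pq.1:ℚ) - 1)) * (ch (b 0) pq.1 * ∏ i, ch (b (Fin.succ i)) (t i))
            + ch (b 0) pq.1 * ((∏ i, ch (b (Fin.succ i)) (t i))
                * (∑ i, x (Fin.succ i) * ((t i : ℚ) * ((t i : ℚ) - 1)))) := by
        intro t _
        rw [Fin.prod_univ_succ, Fin.sum_univ_succ]
        simp only [Fin.cons_zero, Fin.cons_succ]
        ring
      rw [Finset.sum_congr rfl expand, Finset.sum_add_distrib, ← Finset.mul_sum, ← Finset.mul_sum,
        tv0 m (fun i => b (Fin.succ i)) pq.2, ← Finset.mul_sum,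
        ih (fun i => b (Fin.succ i)) (fun i => x (Fin.succ i)) pq.2]
      ring
    rw [Finset.sum_congr rfl step, Finset.sum_add_distrib]
    have s1 : ∑ pq ∈ antidiagonal n,
        x 0 * ((pq.1:ℚ) * ((pq.1:ℚ) - 1) * ch (b 0) pq.1) * ch ((∑ i, b (Fin.succ i) : ℕ) : ℤ) pq.2
        = x 0 * ((b 0 : ℚ) * ((b 0 : ℚ) - 1)) * ch (((b 0 : ℕ):ℤ) + (∑ i, b (Fin.succ i) : ℕ) - 2) ((n:ℤ) - 2) := by
      have e : ∀ pq ∈ antidiagonal n,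
          x 0 * ((pq.1:ℚ) * ((pq.1:ℚ) - 1) * ch (b 0) pq.1) * ch ((∑ i, b (Fin.succ i) : ℕ) : ℤ) pq.2
          = (x 0 * ((b 0:ℚ) * ((b 0:ℚ) - 1)))
              * (ch (((b 0:ℕ):ℤ)-2) ((pq.1:ℤ)-2) * ch ((∑ i, b (Fin.succ i) : ℕ) : ℤ) pq.2) := by
        intro pq _
        have h := chP2 ((b 0 : ℕ) : ℤ) ((pq.1 : ℕ) : ℤ)
        push_cast at h
        rw [show x 0 * ((pq.1:ℚ) * ((pq.1:ℚ) - 1) * ch (b 0) pq.1) * ch ((∑ i, b (Fin.succ i) : ℕ) : ℤ) pq.2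
            = x 0 * ((pq.1:ℚ) * ((pq.1:ℚ) - 1) * ch (b 0) pq.1) * ch ((∑ i, b (Fin.succ i) : ℕ) : ℤ) pq.2 from rfl]
        rw [show (pq.1:ℚ) * ((pq.1:ℚ) - 1) * ch (b 0) pq.1
            = (b 0:ℚ) * ((b 0:ℚ) - 1) * ch (((b 0:ℕ):ℤ)-2) (((pq.1:ℕ):ℤ)-2) from by
          rw [← h]]
        push_cast
        ring
      rw [Finset.sum_congr rfl e, ← Finset.mul_sum]
      by_cases hb : 2 ≤ b 0
      · have h := vd 2 (b 0) (∑ i, b (Fin.succ i)) n hb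
        push_cast at h ⊢
        rw [h]
      · have hb0 : (b 0:ℚ) * ((b 0:ℚ) - 1) = 0 := by
          interval_cases h : b 0 <;> norm_num
        rw [hb0]
        simp only [mul_zero, zero_mul]
    have s2 : ∑ pq ∈ antidiagonal n,
        ch (b 0) pq.1 * ((∑ i, x (Fin.succ i) * ((b (Fin.succ i) : ℚ) * ((b (Fin.succ i) : ℚ) - 1)))
            * ch (((∑ i, b (Fin.succ i) : ℕ) : ℤ) - 2) ((pq.2:ℤ) - 2))
        = (∑ i, x (Fin.succ i) * ((b (Fin.succ i) : ℚ) * ((b (Fin.succ i) : ℚ) - 1)))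
            * ch (((b 0 : ℕ):ℤ) + (∑ i, b (Fin.succ i) : ℕ) - 2) ((n:ℤ) - 2) := by
      have e : ∀ pq ∈ antidiagonal n,
          ch (b 0) pq.1 * ((∑ i, x (Fin.succ i) * ((b (Fin.succ i) : ℚ) * ((b (Fin.succ i) : ℚ) - 1)))
            * ch (((∑ i, b (Fin.succ i) : ℕ) : ℤ) - 2) ((pq.2:ℤ) - 2))
          = (∑ i, x (Fin.succ i) * ((b (Fin.succ i) : ℚ) * ((b (Fin.succ i) : ℚ) - 1)))
            * (ch (b 0) pq.1 * ch (((∑ i, b (Fin.succ i) : ℕ) : ℤ) - 2) ((pq.2:ℤ) - 2)) := by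
        intro pq _; ring
      rw [Finset.sum_congr rfl e, ← Finset.mul_sum]
      by_cases hB : 2 ≤ ∑ i, b (Fin.succ i)
      · have h := vd' 2 (b 0) (∑ i, b (Fin.succ i)) n hB
        push_cast at h ⊢
        rw [h]
      · have hx0 : (∑ i, x (Fin.succ i) * ((b (Fin.succ i) : ℚ) * ((b (Fin.succ i) : ℚ) - 1)))
            * (∑ pq ∈ antidiagonal n, ch (b 0) pq.1 * ch (((∑ i, b (Fin.succ i) : ℕ) : ℤ) - 2) ((pq.2:ℤ) - 2))
            = 0 ∧ (∑ i, x (Fin.succ i) * ((b (Fin.succ i) : ℚ) * ((b (Fin.succ i) : ℚ) - 1))) = 0 := by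
          have hz : (∑ i, x (Fin.succ i) * ((b (Fin.succ i) : ℚ) * ((b (Fin.succ i) : ℚ) - 1))) = 0 := by
            refine Finset.sum_eq_zero fun i _ => ?_
            have hbi : b (Fin.succ i) ≤ 1 := by
              by_contra hc
              push_neg at hc
              have : 2 ≤ ∑ j, b (Fin.succ j) :=
                le_trans hc (Finset.single_le_sum (f := fun j => b (Fin.succ j)) (fun _ _ => Nat.zero_le _) (Finset.mem_univ i))
              exact hB this
            interval_cases h : b (Fin.succ i) <;> norm_num
          exact ⟨by rw [hz]; ring, hz⟩
        rw [hx0.1, hx0.2, zero_mul]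
    rw [s1, s2, Fin.sum_univ_succ (f := fun i => x i * ((b i : ℚ) * ((b i:ℚ) - 1))), Fin.sum_univ_succ (f := fun i => (b i : ℕ))]
    push_cast
    ring

theorem stmt6 (m n : ℕ) (hm : 1 ≤ m) (a c : Fin m → ℕ) (x : Fin m → ℚ) :
    (∑ k ∈ Finset.Nat.antidiagonalTuple m n, (∏ i, ch (a i) (k i) * ch (k i) (c i)) * (∑ i, x i * (k i : ℚ) ^ 2))
        * (((∑ i, (a i : ℚ)) - (∑ i, (c i : ℚ))) * ((∑ i, (a i : ℚ)) - (∑ i, (c i : ℚ)) - 1))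
      = ch ((∑ i, (a i : ℤ)) - ∑ i, (c i : ℤ)) ((n : ℤ) - ∑ i, (c i : ℤ)) * (∏ i, ch (a i) (c i))
        * (((n : ℚ) - (∑ i, (c i : ℚ))) * (((n : ℚ) - (∑ i, (c i : ℚ)) - 1) * (∑ i, x i * (a i : ℚ) ^ 2)
              + ((∑ i, (a i : ℚ)) - (n : ℚ)) * ((∑ i, x i * (a i : ℚ)) - (∑ i, x i * (c i : ℚ)) + 2 * (∑ i, x i * (a i : ℚ) * (c i : ℚ))))
           + ((∑ i, (a i : ℚ)) - (n : ℚ)) * ((∑ i, (a i : ℚ)) - (n : ℚ) - 1) * (∑ i, x i * (c i : ℚ) ^ 2)) := by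
  by_cases hac : ∀ i, c i ≤ a i
  · by_cases hn : (∑ i, c i) ≤ n
    · -- main case
      set b : Fin m → ℕ := fun i => a i - c i with hb
      set B : ℕ := ∑ i, b i with hB
      set s : ℕ := n - ∑ i, c i with hs
      have hsn : n = s + ∑ i, c i := by omega
      -- rewrite the product
      have hprod : ∀ k : Fin m → ℕ, (∏ i, ch (a i) (k i) * ch (k i) (c i))
          = (∏ i, ch (a i) (c i)) * ∏ i, ch (b i) (((k i : ℕ) : ℤ) - (c i : ℕ)) := by
        intro k
        rw [← Finset.prod_mul_distrib]
        refine Finset.prod_congr rfl fun i _ => ?_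
        rw [tri (a i) (c i) (k i)]
        congr 2
        rw [hb]
        push_cast [Nat.cast_sub (hac i)]
        ring
      have hLfact : (∑ k ∈ Finset.Nat.antidiagonalTuple m n,
            (∏ i, ch (a i) (k i) * ch (k i) (c i)) * (∑ i, x i * (k i : ℚ) ^ 2))
          = (∏ i, ch (a i) (c i)) * ∑ k ∈ Finset.Nat.antidiagonalTuple m n,
            (∏ i, ch (b i) (((k i : ℕ) : ℤ) - (c i : ℕ))) * (∑ i, x i * (k i : ℚ) ^ 2) := by
        rw [Finset.mul_sum]
        refine Finset.sum_congr rfl fun k _ => ?_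
        rw [hprod k]
        ring
      -- reindex
      have reindex : ∑ k ∈ Finset.Nat.antidiagonalTuple m n,
            (∏ i, ch (b i) (((k i : ℕ) : ℤ) - (c i : ℕ))) * (∑ i, x i * (k i : ℚ) ^ 2)
          = ∑ j ∈ Finset.Nat.antidiagonalTuple m s,
            (∏ i, ch (b i) (j i)) * (∑ i, x i * ((j i + c i : ℕ) : ℚ) ^ 2) := by
        have hinj : ∀ j ∈ Finset.Nat.antidiagonalTuple m s, ∀ j' ∈ Finset.Nat.antidiagonalTuple m s,
            (fun i => j i + c i) = (fun i => j' i + c i) → j = j' := by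
          intro j _ j' _ h
          funext i
          have := congrFun h i
          omega
        have himg : (Finset.Nat.antidiagonalTuple m s).image (fun j => fun i => j i + c i)
            ⊆ Finset.Nat.antidiagonalTuple m n := by
          intro k hk
          obtain ⟨j, hj, rfl⟩ := Finset.mem_image.mp hk
          rw [Finset.Nat.mem_antidiagonalTuple] at hj ⊢
          rw [Finset.sum_add_distrib, hj, hsn]
        have hvan : ∀ k ∈ Finset.Nat.antidiagonalTuple m n,
            k ∉ (Finset.Nat.antidiagonalTuple m s).image (fun j => fun i => j i + c i) →
            (∏ i, ch (b i) (((k i : ℕ) : ℤ) - (c i : ℕ))) * (∑ i, x i * (k i : ℚ) ^ 2) = 0 := by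
          intro k hk hkim
          have hex : ∃ i, k i < c i := by
            by_contra hcon
            push_neg at hcon
            refine hkim (Finset.mem_image.mpr ⟨fun i => k i - c i, ?_, ?_⟩)
            · rw [Finset.Nat.mem_antidiagonalTuple] at hk ⊢
              have h1 : ∑ i, (k i - c i + c i) = n := by
                rw [Finset.sum_congr rfl (fun i _ => Nat.sub_add_cancel (hcon i)), hk]
              rw [Finset.sum_add_distrib] at h1
              omega
            · funext i
              have h2 := hcon i
              simp only []
              omega
          obtain ⟨i1, hlt⟩ := hex
          rw [Finset.prod_eq_zero (Finset.mem_univ i1) (ch_neg (by push_cast; omega)), zero_mul]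
        rw [← Finset.sum_subset himg hvan, Finset.sum_image hinj]
        refine Finset.sum_congr rfl fun j _ => ?_
        congr 1
        refine Finset.prod_congr rfl fun i _ => ?_
        congr 1
        push_cast
        ring
      -- expand the weight
      have wexp : ∀ j ∈ Finset.Nat.antidiagonalTuple m s,
          (∏ i, ch (b i) (j i)) * (∑ i, x i * ((j i + c i : ℕ) : ℚ) ^ 2)
          = (∏ i, ch (b i) (j i)) * (∑ i, x i * ((j i : ℚ) * ((j i : ℚ) - 1)))
            + ((∏ i, ch (b i) (j i)) * (∑ i, (fun i => x i * (2 * (c i : ℚ) + 1)) i * (j i : ℚ))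
              + (∏ i, ch (b i) (j i)) * (∑ i, x i * (c i : ℚ) ^ 2)) := by
        intro j _
        have : (∑ i, x i * ((j i + c i : ℕ) : ℚ) ^ 2)
            = (∑ i, x i * ((j i : ℚ) * ((j i : ℚ) - 1)))
              + ((∑ i, (fun i => x i * (2 * (c i : ℚ) + 1)) i * (j i : ℚ)) + (∑ i, x i * (c i : ℚ) ^ 2)) := by
          rw [← Finset.sum_add_distrib, ← Finset.sum_add_distrib]
          refine Finset.sum_congr rfl fun i _ => ?_
          push_cast
          ring
        rw [this]
        ring
      have inner : ∑ j ∈ Finset.Nat.antidiagonalTuple m s,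
            (∏ i, ch (b i) (j i)) * (∑ i, x i * ((j i + c i : ℕ) : ℚ) ^ 2)
          = (∑ i, x i * ((b i : ℚ) * ((b i : ℚ) - 1))) * ch ((B : ℤ) - 2) ((s:ℤ) - 2)
            + ((∑ i, x i * (2 * (c i : ℚ) + 1) * (b i : ℚ)) * ch ((B : ℤ) - 1) ((s:ℤ) - 1)
              + ch (B : ℤ) s * (∑ i, x i * (c i : ℚ) ^ 2)) := by
        rw [Finset.sum_congr rfl wexp, Finset.sum_add_distrib, Finset.sum_add_distrib,
          tv2 m b x s, tv1 m b (fun i => x i * (2 * (c i : ℚ) + 1)) s, ← Finset.sum_mul, tv0 m b s]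
      rw [hLfact, reindex, inner]
      -- cast facts
      have hBZ : (∑ i, (a i : ℤ)) - ∑ i, (c i : ℤ) = (B : ℤ) := by
        rw [hB]
        push_cast [hb, Nat.cast_sub]
        rw [Finset.sum_congr rfl (fun i _ => by rw [Nat.cast_sub (hac i)] : ∀ i ∈ univ, ((a i - c i : ℕ) : ℤ) = (a i : ℤ) - (c i : ℤ)), Finset.sum_sub_distrib]
      have hsZ : (n : ℤ) - ∑ i, (c i : ℤ) = (s : ℤ) := by
        have : ((∑ i, c i : ℕ) : ℤ) = ∑ i, (c i : ℤ) := by push_cast; rfl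
        omega
      have hA0 : (∑ i, (a i : ℚ)) = (B : ℚ) + (∑ i, (c i : ℚ)) := by
        rw [hB]
        push_cast
        rw [Finset.sum_congr rfl (fun i _ => by rw [hb]; push_cast [Nat.cast_sub (hac i)]; ring : ∀ i ∈ univ, ((b i : ℕ) : ℚ) = (a i : ℚ) - (c i : ℚ)), Finset.sum_sub_distrib]
        ring
      have hnq : (n : ℚ) = (s : ℚ) + (∑ i, (c i : ℚ)) := by
        rw [hsn]
        push_cast
        ring
      rw [hBZ, hsZ, hA0, hnq]
      -- choose relations
      have hch1 : (B : ℚ) * ch ((B:ℤ) - 1) ((s:ℤ) - 1) = (s : ℚ) * ch (B:ℤ) (s:ℤ) := by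
        have h := chP1 (B : ℤ) (s : ℤ)
        push_cast at h
        linarith [h]
      have hch2 : (B : ℚ) * ((B:ℚ) - 1) * ch ((B:ℤ) - 2) ((s:ℤ) - 2)
          = (s : ℚ) * ((s:ℚ) - 1) * ch (B:ℤ) (s:ℤ) := by
        have h := chP2 (B : ℤ) (s : ℤ)
        push_cast at h
        linarith [h]
      -- sum expansions
      have hU2 : (∑ i, x i * ((b i : ℚ) * ((b i : ℚ) - 1)))
          = (∑ i, x i * (a i : ℚ)^2) - 2*(∑ i, x i * (a i : ℚ) * (c i : ℚ)) + (∑ i, x i * (c i : ℚ)^2)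
            - (∑ i, x i * (a i : ℚ)) + (∑ i, x i * (c i : ℚ)) := by
        rw [Finset.mul_sum, ← Finset.sum_sub_distrib, ← Finset.sum_add_distrib,
          ← Finset.sum_sub_distrib, ← Finset.sum_add_distrib]
        refine Finset.sum_congr rfl fun i _ => ?_
        rw [hb]
        push_cast [Nat.cast_sub (hac i)]
        ring
      have hU1 : (∑ i, x i * (2 * (c i : ℚ) + 1) * (b i : ℚ))
          = (∑ i, x i * (a i : ℚ)) - (∑ i, x i * (c i : ℚ))
            + 2*(∑ i, x i * (a i : ℚ) * (c i : ℚ)) - 2*(∑ i, x i * (c i : ℚ)^2) := by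
        rw [Finset.mul_sum, Finset.mul_sum, ← Finset.sum_sub_distrib, ← Finset.sum_add_distrib,
          ← Finset.sum_sub_distrib]
        refine Finset.sum_congr rfl fun i _ => ?_
        rw [hb]
        push_cast [Nat.cast_sub (hac i)]
        ring
      rw [hU2, hU1]
      linear_combination ((∏ i, ch (a i) (c i)) *
          ((∑ i, x i * (a i : ℚ)^2) - 2*(∑ i, x i * (a i : ℚ) * (c i : ℚ)) + (∑ i, x i * (c i : ℚ)^2)
            - (∑ i, x i * (a i : ℚ)) + (∑ i, x i * (c i : ℚ)))) * hch2
        + ((∏ i, ch (a i) (c i)) * ((B:ℚ) - 1) *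
          ((∑ i, x i * (a i : ℚ)) - (∑ i, x i * (c i : ℚ))
            + 2*(∑ i, x i * (a i : ℚ) * (c i : ℚ)) - 2*(∑ i, x i * (c i : ℚ)^2))) * hch1
    · -- n < ∑ c : both sides 0
      push_neg at hn
      have hL : (∑ k ∈ Finset.Nat.antidiagonalTuple m n,
          (∏ i, ch (a i) (k i) * ch (k i) (c i)) * (∑ i, x i * (k i : ℚ) ^ 2)) = 0 := by
        refine Finset.sum_eq_zero fun k hk => ?_
        rw [Finset.Nat.mem_antidiagonalTuple] at hk
        have hex : ∃ i, k i < c i := by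
          by_contra hcon
          push_neg at hcon
          have := Finset.sum_le_sum (fun i (_ : i ∈ univ) => hcon i)
          omega
        obtain ⟨i1, hlt⟩ := hex
        have hz : ch (a i1) (k i1) * ch (k i1) (c i1) = 0 := by
          rw [ch_nat (k i1) (c i1), Nat.choose_eq_zero_of_lt hlt, Nat.cast_zero, mul_zero]
        rw [Finset.prod_eq_zero (Finset.mem_univ i1) hz, zero_mul]
      have hR : ch ((∑ i, (a i : ℤ)) - ∑ i, (c i : ℤ)) ((n : ℤ) - ∑ i, (c i : ℤ)) = 0 := by
        refine ch_neg ?_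
        have : ((∑ i, c i : ℕ) : ℤ) = ∑ i, (c i : ℤ) := by push_cast; rfl
        omega
      rw [hL, hR]
      ring
  · -- some a i < c i : both sides 0
    push_neg at hac
    obtain ⟨i0, hi0⟩ := hac
    have hL : (∑ k ∈ Finset.Nat.antidiagonalTuple m n,
        (∏ i, ch (a i) (k i) * ch (k i) (c i)) * (∑ i, x i * (k i : ℚ) ^ 2)) = 0 := by
      refine Finset.sum_eq_zero fun k _ => ?_
      have hz : ch (a i0) (k i0) * ch (k i0) (c i0) = 0 := by
        by_cases hk : k i0 ≤ a i0
        · rw [ch_nat (k i0) (c i0), Nat.choose_eq_zero_of_lt (by omega), Nat.cast_zero, mul_zero]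
        · rw [ch_nat (a i0) (k i0), Nat.choose_eq_zero_of_lt (by omega), Nat.cast_zero, zero_mul]
      rw [Finset.prod_eq_zero (Finset.mem_univ i0) hz, zero_mul]
    have hR : (∏ i, ch (a i) (c i)) = 0 := by
      refine Finset.prod_eq_zero (Finset.mem_univ i0) ?_
      rw [ch_nat (a i0) (c i0), Nat.choose_eq_zero_of_lt hi0, Nat.cast_zero]
    rw [hL, hR]
    ring
end
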